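/- arXiv:1508.03154 — 3 statements merged into one kernel-verified Lean document; each statement's English description precedes it below -/
import Mathlib

section
/- Suppose f is irreducible in ℤ[u^{±1}], noncyclotomic, and hyperbolic. Then w^Δ := w⁺ = w⁻ satisfies lim_{|n|→∞} w^Δ_n = 0, the point x^Δ := ρ(w^Δ) ∈ X_f is homoclinic for α_f, and every homoclinic point x of α_f has the form x = Σ_{n∈ℤ} h_n · α_f^n(x^Δ) for some finitely supported function h : ℤ → ℤ; in particular the subgroup of X_f generated by the α_f-orbit of x^Δ equals the group Δ_{α_f}(X_f) of all homoclinic points. -/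
open Filter Topology Polynomial

noncomputable section

/-- The circle `ℝ/ℤ`. -/
abbrev Torus := AddCircle (1 : ℝ)

/-- `f(σ)` acting on `𝕋^ℤ`. -/
def fsT (f : Polynomial ℤ) (x : ℤ → Torus) : ℤ → Torus :=
  fun n => ∑ k ∈ Finset.range (f.natDegree + 1), f.coeff k • x (n + (k : ℤ))

/-- `X_f = ker f(σ) ⊆ 𝕋^ℤ`. -/
def Xf (f : Polynomial ℤ) : Set (ℤ → Torus) := {x | ∀ n, fsT f x n = 0}

/-- `σ^k` on `𝕋^ℤ` (the `k`-th power of the shift, `k ∈ ℤ`). -/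
def shiftIterT (k : ℤ) (x : ℤ → Torus) : ℤ → Torus := fun n => x (n + k)

/-- A point of `𝕋^ℤ` is homoclinic (to `0`) if `σ^k x → 0` as `|k| → ∞`. -/
def HomoclinicT (x : ℤ → Torus) : Prop :=
  Tendsto (fun k : ℤ => shiftIterT k x) cofinite (nhds 0)

/-- `f(σ̄)` on real sequences. -/
def fsR (f : Polynomial ℤ) (w : ℤ → ℝ) : ℤ → ℝ :=
  fun n => ∑ k ∈ Finset.range (f.natDegree + 1), (f.coeff k : ℝ) * w (n + (k : ℤ))

/-- Bounded real sequences. -/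
def Bdd (w : ℤ → ℝ) : Prop := ∃ B : ℝ, ∀ n, |w n| ≤ B

/-- The sequence `v^Δ`. -/
def vDelta : ℤ → ℝ := fun n => if n = 0 then 1 else 0

/-- Coordinatewise reduction mod 1, `ρ : ℓ^∞(ℤ,ℝ) → 𝕋^ℤ`. -/
def rhoT (w : ℤ → ℝ) : ℤ → Torus := fun n => (w n : Torus)

/-- `f` is noncyclotomic. -/
def Noncyclotomic (f : Polynomial ℤ) : Prop :=
  ∀ θ : ℂ, Polynomial.aeval θ f = 0 → ∀ n : ℕ, 0 < n → θ ^ n ≠ 1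

/-- `w⁺`. -/
def IsWplus (f : Polynomial ℤ) (w : ℤ → ℝ) : Prop :=
  Bdd w ∧ fsR f w = vDelta ∧ Tendsto w atTop (nhds 0)

/-- `w⁻`. -/
def IsWminus (f : Polynomial ℤ) (w : ℤ → ℝ) : Prop :=
  Bdd w ∧ fsR f w = vDelta ∧ Tendsto w atBot (nhds 0)

/-! Since `f` has no root on the unit circle, `f(σ̄)` is injective on bounded sequences: over
`ℂ` it factors into the operators `σ̄ - θ`, and a bounded solution of `vₙ₊₁ = θ vₙ` with `|θ| ≠ 1`
vanishes. Hence `w⁺ = w⁻`, which then decays in both directions, so `x^Δ` is homoclinic.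
Conversely, a homoclinic `x ∈ X_f` lifts to a bounded real sequence `w` tending to `0`; `f(σ̄) w`
is integer valued because `f(σ) x = 0`, and tends to `0`, so it is a finite integer combination of
shifts of `v^Δ`. By injectivity `w` is the same combination of shifts of `w^Δ`, and reducing mod
`1` represents `x`. -/

def shiftC : Module.End ℂ (ℤ → ℂ) := LinearMap.funLeft ℂ ℂ (· + 1)

def BddC (v : ℤ → ℂ) : Prop := ∃ B : ℝ, ∀ n, ‖v n‖ ≤ B

lemma shiftC_pow_apply (k : ℕ) (v : ℤ → ℂ) (n : ℤ) : (shiftC ^ k) v n = v (n + k) := by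
  induction k generalizing n with
  | zero => simp
  | succ k ih =>
    rw [pow_succ', Module.End.mul_apply]
    change (shiftC ^ k) v (n + 1) = _
    rw [ih, Nat.cast_succ, add_assoc, add_comm 1]

lemma aeval_shiftC_apply (f : ℤ[X]) (v : ℤ → ℂ) (n : ℤ) :
    aeval shiftC f v n = ∑ k ∈ Finset.range (f.natDegree + 1), f.coeff k • v (n + k) := by
  simp [aeval_eq_sum_range, LinearMap.sum_apply, Finset.sum_apply, shiftC_pow_apply]

lemma aeval_X_sub_C_shiftC_apply (θ : ℂ) (v : ℤ → ℂ) (n : ℤ) :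
    aeval shiftC (X - C θ) v n = v (n + 1) - θ * v n := by
  simp [shiftC]

lemma BddC.aeval_X_sub_C_shiftC {v : ℤ → ℂ} (hv : BddC v) (θ : ℂ) :
    BddC (aeval shiftC (X - C θ) v) := by
  obtain ⟨B, hB⟩ := hv
  refine ⟨B + ‖θ‖ * B, fun n => ?_⟩
  rw [aeval_X_sub_C_shiftC_apply]
  calc ‖v (n + 1) - θ * v n‖ ≤ ‖v (n + 1)‖ + ‖θ‖ * ‖v n‖ := by
        simpa only [norm_mul] using norm_sub_le (v (n + 1)) (θ * v n)
    _ ≤ B + ‖θ‖ * B := by gcongr <;> exact hB _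

lemma eq_zero_of_bddC_of_forall_add_one_eq_mul {θ : ℂ} (hθ : ‖θ‖ ≠ 1) {g : ℤ → ℂ}
    (hg : BddC g) (hrec : ∀ n, g (n + 1) = θ * g n) : g = 0 := by
  obtain ⟨B, hB⟩ := hg
  have hpow (k : ℕ) (n : ℤ) : g (n + k) = θ ^ k * g n := by
    induction k with
    | zero => simp
    | succ k ih => rw [Nat.cast_succ, ← add_assoc, hrec, ih, pow_succ']; ring
  -- `‖gₙ‖ ≤ B rᵏ` for all `k`, with `r = ‖θ‖` or `r = ‖θ‖⁻¹` according as `‖θ‖ < 1` or `‖θ‖ > 1`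
  suffices ∃ r : ℝ, 0 ≤ r ∧ r < 1 ∧ ∀ n, ∀ k : ℕ, ‖g n‖ ≤ B * r ^ k by
    obtain ⟨r, hr0, hr1, hle⟩ := this
    funext n
    have hlim : Tendsto (fun k : ℕ => B * r ^ k) atTop (𝓝 0) := by
      simpa using (tendsto_pow_atTop_nhds_zero_of_lt_one hr0 hr1).const_mul B
    exact norm_le_zero_iff.1 (ge_of_tendsto' hlim (hle n))
  rcases hθ.lt_or_gt with hlt | hgt
  · refine ⟨‖θ‖, norm_nonneg _, hlt, fun n k => ?_⟩
    calc ‖g n‖ = ‖θ‖ ^ k * ‖g (n - k)‖ := by rw [← norm_pow, ← norm_mul, ← hpow, sub_add_cancel]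
      _ ≤ B * ‖θ‖ ^ k := by rw [mul_comm]; gcongr; exact hB _
  · have hθ0 : θ ≠ 0 := norm_pos_iff.1 (one_pos.trans hgt)
    refine ⟨‖θ‖⁻¹, by positivity, inv_lt_one_of_one_lt₀ hgt, fun n k => ?_⟩
    calc ‖g n‖ = ‖θ‖⁻¹ ^ k * ‖g (n + k)‖ := by
          rw [hpow, norm_mul, norm_pow, ← mul_assoc, ← mul_pow, inv_mul_cancel₀ (by simpa), one_pow,
            one_mul]
      _ ≤ B * ‖θ‖⁻¹ ^ k := by rw [mul_comm]; gcongr; exact hB _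

lemma eq_zero_of_bddC_of_aeval_prod_X_sub_C_eq_zero (s : Multiset ℂ) (hs : ∀ θ ∈ s, ‖θ‖ ≠ 1)
    {v : ℤ → ℂ} (hv : BddC v) (h : aeval shiftC (s.map fun θ => X - C θ).prod v = 0) : v = 0 := by
  induction s using Multiset.induction_on generalizing v with
  | empty => simpa using h
  | cons θ s ih =>
    rw [Multiset.map_cons, Multiset.prod_cons, mul_comm, map_mul, Module.End.mul_apply] at h
    have hfactor : aeval shiftC (X - C θ) v = 0 :=
      ih (fun θ' hθ' => hs θ' (Multiset.mem_cons_of_mem hθ')) (hv.aeval_X_sub_C_shiftC θ) h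
    refine eq_zero_of_bddC_of_forall_add_one_eq_mul (hs θ (Multiset.mem_cons_self _ _)) hv
      fun n => ?_
    have := aeval_X_sub_C_shiftC_apply θ v n
    rw [hfactor, Pi.zero_apply] at this
    linear_combination -this

lemma eq_zero_of_bddC_of_aeval_eq_zero {p : ℂ[X]} (hp : p ≠ 0)
    (hroots : ∀ θ, p.IsRoot θ → ‖θ‖ ≠ 1)
    {v : ℤ → ℂ} (hv : BddC v) (h : aeval shiftC p v = 0) : v = 0 := by
  rw [(IsAlgClosed.splits p).eq_prod_roots, map_mul, aeval_C, Module.End.mul_apply,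
    Module.algebraMap_end_apply, smul_eq_zero] at h
  refine h.resolve_left (leadingCoeff_ne_zero.2 hp) |> eq_zero_of_bddC_of_aeval_prod_X_sub_C_eq_zero
    _ (fun θ hθ => hroots θ (isRoot_of_mem_roots hθ)) hv

lemma eq_zero_of_bdd_of_fsR_eq_zero {f : ℤ[X]} (hf : f ≠ 0)
    (hroots : ∀ θ : ℂ, aeval θ f = 0 → ‖θ‖ ≠ 1) {d : ℤ → ℝ} (hd : Bdd d) (h : fsR f d = 0) :
    d = 0 := by
  set v : ℤ → ℂ := fun n => (d n : ℂ)
  have hv : BddC v := by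
    obtain ⟨B, hB⟩ := hd
    exact ⟨B, fun n => by simpa [v] using hB n⟩
  have hfsR (n : ℤ) : aeval shiftC f v n = fsR f d n := by
    simp [aeval_shiftC_apply, fsR, v]
  have hp : f.map (algebraMap ℤ ℂ) ≠ 0 :=
    (Polynomial.map_ne_zero_iff (algebraMap ℤ ℂ).injective_int).2 hf
  have hv0 : v = 0 := by
    refine eq_zero_of_bddC_of_aeval_eq_zero hp (fun θ hθ => hroots θ ?_) hv ?_
    · rwa [IsRoot, eval_map_algebraMap] at hθ
    · ext n
      rw [aeval_map_algebraMap, hfsR, h, Pi.zero_apply, Complex.ofReal_zero, Pi.zero_apply]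
  ext n
  simpa [v] using congr_fun hv0 n

def fsRLinearMap (f : ℤ[X]) : (ℤ → ℝ) →ₗ[ℝ] (ℤ → ℝ) where
  toFun := fsR f
  map_add' u w := by ext n; simp [fsR, mul_add, Finset.sum_add_distrib]
  map_smul' c w := by ext n; simp [fsR, Finset.mul_sum, mul_left_comm]

lemma Bdd.sub {u w : ℤ → ℝ} (hu : Bdd u) (hw : Bdd w) : Bdd (u - w) := by
  obtain ⟨B, hB⟩ := hu
  obtain ⟨C, hC⟩ := hw
  exact ⟨B + C, fun n => (abs_sub _ _).trans (add_le_add (hB n) (hC n))⟩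

lemma eq_of_bdd_of_fsR_eq {f : ℤ[X]} (hf : f ≠ 0) (hroots : ∀ θ : ℂ, aeval θ f = 0 → ‖θ‖ ≠ 1)
    {u w : ℤ → ℝ} (hu : Bdd u) (hw : Bdd w) (h : fsR f u = fsR f w) : u = w := by
  refine sub_eq_zero.1 (eq_zero_of_bdd_of_fsR_eq_zero hf hroots (hu.sub hw) ?_)
  change fsRLinearMap f (u - w) = 0
  rw [map_sub, sub_eq_zero]
  exact h

lemma fsR_comp_add_right (f : ℤ[X]) (w : ℤ → ℝ) (m : ℤ) :
    fsR f (fun j => w (j + m)) = fun j => fsR f w (j + m) := by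
  ext j
  simp only [fsR, add_right_comm]

lemma tendsto_fsR_cofinite (f : ℤ[X]) {w : ℤ → ℝ} (hw : Tendsto w cofinite (𝓝 0)) :
    Tendsto (fsR f w) cofinite (𝓝 0) := by
  have hshift (k : ℕ) : Tendsto (fun n : ℤ => w (n + k)) cofinite (𝓝 0) :=
    hw.comp (add_left_injective (k : ℤ)).tendsto_cofinite
  have := tendsto_finsetSum (Finset.range (f.natDegree + 1)) fun k _ =>
    (hshift k).const_mul (f.coeff k : ℝ)
  simp only [mul_zero, Finset.sum_const_zero] at this
  exact this

def shiftCombination (h : ℤ →₀ ℤ) (w : ℤ → ℝ) : ℤ → ℝ := h.sum fun n c => c • fun j => w (j + n)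

lemma fsR_shiftCombination (f : ℤ[X]) (h : ℤ →₀ ℤ) (w : ℤ → ℝ) :
    fsR f (shiftCombination h w) = shiftCombination h (fsR f w) := by
  change fsRLinearMap f _ = _
  simp only [shiftCombination, map_finsuppSum, map_zsmul]
  exact congr_arg h.sum (funext₂ fun n c => congr_arg (c • ·) (fsR_comp_add_right f w n))

lemma shiftCombination_vDelta (h : ℤ →₀ ℤ) (j : ℤ) : shiftCombination h vDelta j = h (-j) := by
  simp +contextual [shiftCombination, Finsupp.sum, Finset.sum_apply, vDelta,
    add_eq_zero_iff_neg_eq', neg_eq_iff_eq_neg]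

lemma Bdd.shiftCombination {w : ℤ → ℝ} (hw : Bdd w) (h : ℤ →₀ ℤ) : Bdd (shiftCombination h w) := by
  obtain ⟨B, hB⟩ := hw
  refine ⟨h.sum fun _ c => |(c : ℝ)| * B, fun j => ?_⟩
  simp only [_root_.shiftCombination, Finsupp.sum, Finset.sum_apply, Pi.smul_apply]
  simp only [zsmul_eq_mul]
  refine (Finset.abs_sum_le_sum_abs _ _).trans (Finset.sum_le_sum fun n _ => ?_)
  rw [abs_mul]
  exact mul_le_mul_of_nonneg_left (hB _) (abs_nonneg _)

def rhoHom : (ℤ → ℝ) →+ (ℤ → Torus) := (QuotientAddGroup.mk' _).compLeft ℤ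

lemma rhoT_shiftCombination (h : ℤ →₀ ℤ) (w : ℤ → ℝ) :
    rhoT (shiftCombination h w) = h.sum fun n c => c • shiftIterT n (rhoT w) := by
  change rhoHom _ = _
  simp only [shiftCombination, map_finsuppSum, map_zsmul]
  rfl

lemma fsT_rhoT (f : ℤ[X]) (w : ℤ → ℝ) : fsT f (rhoT w) = rhoT (fsR f w) := by
  ext n
  simp only [fsT, fsR, rhoT, ← zsmul_eq_mul]
  change _ = QuotientAddGroup.mk' _ _
  simp only [map_sum, map_zsmul]
  rfl

lemma rhoT_vDelta : rhoT vDelta = 0 := by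
  ext n
  by_cases hn : n = 0 <;> simp [rhoT, vDelta, hn]

lemma AddCircle.exists_abs_eq_norm (p : ℝ) (t : AddCircle p) :
    ∃ r : ℝ, (r : AddCircle p) = t ∧ |r| = ‖t‖ := by
  obtain ⟨x, rfl⟩ := QuotientAddGroup.mk_surjective t
  refine ⟨x - round (p⁻¹ * x) * p, ?_, (AddCircle.norm_eq p).symm⟩
  simp [AddCircle.coe_period]

lemma exists_rhoT_eq_of_tendsto {x : ℤ → Torus} (hx : Tendsto x cofinite (𝓝 0)) :
    ∃ w : ℤ → ℝ, rhoT w = x ∧ Bdd w ∧ Tendsto w cofinite (𝓝 0) := by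
  choose w hwx hwn using fun n => AddCircle.exists_abs_eq_norm 1 (x n)
  refine ⟨w, funext hwx, ⟨1 / 2, fun n => ?_⟩, ?_⟩
  · simpa [hwn] using AddCircle.norm_le_half_period 1 one_ne_zero (x := x n)
  · rw [tendsto_zero_iff_abs_tendsto_zero, Function.comp_def]
    simpa only [hwn] using tendsto_zero_iff_norm_tendsto_zero.1 hx

lemma exists_finsupp_intCast_eq {α : Type*} {g : α → ℝ} (hint : ∀ n, ∃ z : ℤ, (z : ℝ) = g n)
    (hg : Tendsto g cofinite (𝓝 0)) : ∃ h : α →₀ ℤ, ∀ n, (h n : ℝ) = g n := by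
  choose z hz using hint
  have hz0 : Tendsto z cofinite (𝓝 0) := by
    rw [Int.isClosedEmbedding_coe_real.isEmbedding.tendsto_nhds_iff]
    simpa [Function.comp_def, hz] using hg
  rw [nhds_discrete, tendsto_pure, eventually_cofinite] at hz0
  exact ⟨Finsupp.ofSupportFinite z hz0, hz⟩

lemma homoclinicT_iff {x : ℤ → Torus} : HomoclinicT x ↔ Tendsto x cofinite (𝓝 0) := by
  refine ⟨fun hx => by simpa [shiftIterT] using tendsto_pi_nhds.1 hx 0, fun hx => ?_⟩
  exact tendsto_pi_nhds.2 fun n => hx.comp (add_right_injective n).tendsto_cofinite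

lemma HomoclinicT.shiftIterT {x : ℤ → Torus} (hx : HomoclinicT x) (m : ℤ) :
    HomoclinicT (shiftIterT m x) :=
  homoclinicT_iff.2 <| (homoclinicT_iff.1 hx).comp (add_left_injective m).tendsto_cofinite

lemma shiftIterT_mem_Xf {f : ℤ[X]} {x : ℤ → Torus} (hx : x ∈ Xf f) (m : ℤ) :
    shiftIterT m x ∈ Xf f := fun n => by
  simpa only [fsT, shiftIterT, add_right_comm] using hx (n + m)

def fsTHom (f : ℤ[X]) : (ℤ → Torus) →+ (ℤ → Torus) where
  toFun := fsT f
  map_zero' := by ext; simp [fsT]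
  map_add' x y := by ext; simp [fsT, smul_add, Finset.sum_add_distrib]

def homoclinicSubgroup : AddSubgroup (ℤ → Torus) where
  carrier := {x | HomoclinicT x}
  zero_mem' := homoclinicT_iff.2 tendsto_const_nhds
  add_mem' hx hy := homoclinicT_iff.2 <| by
    have := (homoclinicT_iff.1 hx).add (homoclinicT_iff.1 hy)
    rwa [add_zero] at this
  neg_mem' hx := homoclinicT_iff.2 <| by
    have := (homoclinicT_iff.1 hx).neg
    rwa [neg_zero] at this

lemma coe_ker_fsTHom_inf_homoclinicSubgroup (f : ℤ[X]) :
    (((fsTHom f).ker ⊓ homoclinicSubgroup : AddSubgroup (ℤ → Torus)) : Set (ℤ → Torus)) =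
      {x | x ∈ Xf f ∧ HomoclinicT x} := by
  ext x
  simp [fsTHom, Xf, homoclinicSubgroup, funext_iff]

lemma coe_closure_range_shiftIterT_eq {f : ℤ[X]} {x₀ : ℤ → Torus} (hx₀ : x₀ ∈ Xf f)
    (hhom : HomoclinicT x₀)
    (hrepr : ∀ x ∈ Xf f, HomoclinicT x → ∃ h : ℤ →₀ ℤ, x = h.sum fun n c => c • shiftIterT n x₀) :
    (AddSubgroup.closure (Set.range fun n : ℤ => shiftIterT n x₀) : Set (ℤ → Torus)) =
      {x | x ∈ Xf f ∧ HomoclinicT x} := by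
  rw [← coe_ker_fsTHom_inf_homoclinicSubgroup]
  congr 1
  refine le_antisymm ((AddSubgroup.closure_le _).2 ?_) fun x hx => ?_
  · rintro _ ⟨n, rfl⟩
    rw [SetLike.mem_coe, ← SetLike.mem_coe, coe_ker_fsTHom_inf_homoclinicSubgroup]
    exact ⟨shiftIterT_mem_Xf hx₀ n, hhom.shiftIterT n⟩
  · rw [← SetLike.mem_coe, coe_ker_fsTHom_inf_homoclinicSubgroup] at hx
    obtain ⟨h, rfl⟩ := hrepr x hx.1 hx.2
    exact AddSubmonoidClass.finsuppSum_mem _ _ _ fun n _ =>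
      zsmul_mem (AddSubgroup.subset_closure (Set.mem_range_self n)) _

lemma exists_finsupp_eq_sum_shiftIterT {f : ℤ[X]} (hf : f ≠ 0)
    (hroots : ∀ θ : ℂ, aeval θ f = 0 → ‖θ‖ ≠ 1) {wΔ : ℤ → ℝ} (hbdd : Bdd wΔ)
    (hwΔ : fsR f wΔ = vDelta)
    {x : ℤ → Torus} (hx : x ∈ Xf f) (hxh : HomoclinicT x) :
    ∃ h : ℤ →₀ ℤ, x = h.sum fun n c => c • shiftIterT n (rhoT wΔ) := by
  obtain ⟨w, rfl, hw_bdd, hw_lim⟩ := exists_rhoT_eq_of_tendsto (homoclinicT_iff.1 hxh)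
  have hint (n : ℤ) : ∃ z : ℤ, (z : ℝ) = fsR f w (-n) := by
    have := congr_fun (fsT_rhoT f w) (-n)
    rw [hx (-n), eq_comm, rhoT, AddCircle.coe_eq_zero_iff] at this
    simpa using this
  obtain ⟨h, hh⟩ := exists_finsupp_intCast_eq hint
    ((tendsto_fsR_cofinite f hw_lim).comp neg_injective.tendsto_cofinite)
  have hfsR : fsR f (shiftCombination h wΔ) = fsR f w := by
    ext j
    rw [fsR_shiftCombination, hwΔ, shiftCombination_vDelta, hh, neg_neg]
  refine ⟨h, ?_⟩
  rw [← rhoT_shiftCombination,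
    eq_of_bdd_of_fsR_eq hf hroots hw_bdd (hbdd.shiftCombination h) hfsR.symm]

theorem fundamental_homoclinic_point_general (f : Polynomial ℤ)
    (hlead : 0 < f.leadingCoeff)
    (hhyp : ∀ θ : ℂ, Polynomial.aeval θ f = 0 → ‖θ‖ ≠ 1)
    (wp wm : ℤ → ℝ) (hwp : IsWplus f wp) (hwm : IsWminus f wm) :
    wp = wm ∧
    Tendsto wp cofinite (nhds 0) ∧
    rhoT wp ∈ Xf f ∧
    HomoclinicT (rhoT wp) ∧
    (∀ x ∈ Xf f, HomoclinicT x →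
      ∃ h : ℤ →₀ ℤ, x = h.sum fun n c => c • shiftIterT n (rhoT wp)) ∧
    ((AddSubgroup.closure (Set.range fun n : ℤ => shiftIterT n (rhoT wp)) : Set (ℤ → Torus))
      = {x | x ∈ Xf f ∧ HomoclinicT x}) := by
  have hf : f ≠ 0 := leadingCoeff_ne_zero.1 hlead.ne'
  obtain ⟨hwp_bdd, hwp_eq, hwp_lim⟩ := hwp
  obtain ⟨hwm_bdd, hwm_eq, hwm_lim⟩ := hwm
  have heq : wp = wm := eq_of_bdd_of_fsR_eq hf hhyp hwp_bdd hwm_bdd (hwp_eq.trans hwm_eq.symm)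
  have hlim : Tendsto wp cofinite (𝓝 0) := by
    rw [Int.cofinite_eq, tendsto_sup]
    exact ⟨heq ▸ hwm_lim, hwp_lim⟩
  have hXf : rhoT wp ∈ Xf f := fun n => by rw [fsT_rhoT, hwp_eq, rhoT_vDelta, Pi.zero_apply]
  have hhom : HomoclinicT (rhoT wp) := by
    have := ((AddCircle.continuous_mk' 1).tendsto 0).comp hlim
    rwa [map_zero, ← homoclinicT_iff] at this
  have hrepr (x) (hx : x ∈ Xf f) (hxh : HomoclinicT x) :=
    exists_finsupp_eq_sum_shiftIterT hf hhyp hwp_bdd hwp_eq hx hxh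
  exact ⟨heq, hlim, hXf, hhom, hrepr, coe_closure_range_shiftIterT_eq hXf hhom hrepr⟩

/-- if `f` is irreducible in `ℤ[u^{±1}]`, noncyclotomic and hyperbolic, then
`w^Δ := w⁺ = w⁻` satisfies `w^Δ_n → 0` as `|n| → ∞`, the point `x^Δ = ρ(w^Δ)` is a
homoclinic point of `α_f`, and every homoclinic point of `α_f` is a finite integer
combination `∑_n h_n α_f^n(x^Δ)`; in particular the subgroup generated by the orbit of
`x^Δ` is the group of all homoclinic points. -/
theorem fundamental_homoclinic_point (f : Polynomial ℤ) (hm : 1 ≤ f.natDegree)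
    (hlead : 0 < f.leadingCoeff) (h0 : f.coeff 0 ≠ 0)
    (hirr : Irreducible (Polynomial.toLaurent f)) (hnc : Noncyclotomic f)
    (hhyp : ∀ θ : ℂ, Polynomial.aeval θ f = 0 → ‖θ‖ ≠ 1)
    (wp wm : ℤ → ℝ) (hwp : IsWplus f wp) (hwm : IsWminus f wm) :
    wp = wm ∧
    Tendsto wp cofinite (nhds 0) ∧
    rhoT wp ∈ Xf f ∧
    HomoclinicT (rhoT wp) ∧
    (∀ x ∈ Xf f, HomoclinicT x →
      ∃ h : ℤ →₀ ℤ, x = h.sum fun n c => c • shiftIterT n (rhoT wp)) ∧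
    ((AddSubgroup.closure (Set.range fun n : ℤ => shiftIterT n (rhoT wp)) : Set (ℤ → Torus))
      = {x | x ∈ Xf f ∧ HomoclinicT x}) :=
  fundamental_homoclinic_point_general f hlead hhyp wp wm hwp hwm

end
end

section
/- Suppose f is irreducible in ℤ[u^{±1}], noncyclotomic, and nonhyperbolic. Let T be a homeomorphism of a compact metrizable space Y whose homoclinic equivalence relation is topologically transitive, i.e. there exists y ∈ Y whose homoclinic class Δ_T(y) is dense in Y. Then every continuous map φ : Y → X_f satisfying φ ∘ T = α_f ∘ φ has image a single point x̄ ∈ X_f with α_f(x̄) = x̄. -/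
/-!
A point `w ∈ X_f` whose coordinates tend to `0` must vanish. Lift it to a real sequence
`w̃ → 0`; then `c = f(σ) w̃` is integer-valued and tends to `0`, so it is finitely supported.
For a root `θ` of `f` with `|θ| = 1`, the partial sums of `∑ cₙ θ⁻ⁿ` reduce, because `f(θ) = 0`,
to boundary terms of `w̃` which tend to `0`; hence `∑ cₙ θ⁻ⁿ = 0`. The integer polynomial
encoding `c` therefore has the root `θ`, so it is divisible by the irreducible `f`, and the
quotient is an integer sequence `g` with `f(σ) g = c`. Now `w̃ - g` is a two-sided decaying
solution of the recurrence `f(σ) = 0`, and factoring `f` over `ℂ` reduces this to first-order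
recurrences, whose decaying solutions vanish. So `w̃ = g` is integer-valued and `w = 0`.

An equivariant `φ` sends homoclinic points to points whose difference is such a `w`, so `φ` is
constant on a dense homoclinic class, hence constant.
-/

open Filter Topology Polynomial

noncomputable section

/-- The shift `σ` on `𝕋^ℤ`. -/
def shiftT (x : ℤ → Torus) : ℤ → Torus := fun n => x (n + 1)

/-- Two points of a metric space are homoclinic under a bijection `T` if
`δ(T^n y, T^n y') → 0` as `|n| → ∞`. -/
def HomoclinicPair {Y : Type*} [MetricSpace Y] (T : Equiv.Perm Y) (y y' : Y) : Prop :=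
  Tendsto (fun n : ℤ => dist ((T ^ n) y) ((T ^ n) y')) cofinite (nhds 0)

section SeqShift

variable (R M : Type*) [CommSemiring R] [AddCommMonoid M] [Module R M]

def seqShift : Module.End R (ℤ → M) := LinearMap.funLeft R M (· + 1)

variable {R M}

theorem seqShift_pow_apply (k : ℕ) (x : ℤ → M) (n : ℤ) : (seqShift R M ^ k) x n = x (n + k) := by
  induction k generalizing n with
  | zero => simp
  | succ k ih =>
    rw [pow_succ', Module.End.mul_apply, seqShift, LinearMap.funLeft_apply, ← seqShift, ih]
    push_cast
    ring_nf

theorem aeval_seqShift_apply (p : R[X]) (x : ℤ → M) (n : ℤ) :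
    aeval (seqShift R M) p x n = ∑ k ∈ Finset.range (p.natDegree + 1), p.coeff k • x (n + k) := by
  simp [aeval_eq_sum_range, LinearMap.sum_apply, Finset.sum_apply, seqShift_pow_apply]

theorem tendsto_aeval_seqShift [TopologicalSpace M] [ContinuousAdd M] [ContinuousConstSMul R M]
    (p : R[X]) {x : ℤ → M} (hx : Tendsto x cofinite (𝓝 0)) :
    Tendsto (aeval (seqShift R M) p x) cofinite (𝓝 0) := by
  simp_rw [funext (aeval_seqShift_apply p x)]
  simpa using tendsto_finsetSum _ fun (k : ℕ) _ =>
    (hx.comp (add_left_injective (k : ℤ)).tendsto_cofinite).const_smul (p.coeff k)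

theorem AddMonoidHom.map_aeval_seqShift_apply {M N : Type*} [AddCommGroup M] [AddCommGroup N]
    (φ : M →+ N) (p : ℤ[X]) (x : ℤ → M) (n : ℤ) :
    φ (aeval (seqShift ℤ M) p x n) = aeval (seqShift ℤ N) p (fun m => φ (x m)) n := by
  simp [aeval_seqShift_apply, map_sum, map_zsmul]

theorem aeval_seqShift_map_intCast {K : Type*} [Field K] [CharZero K] (p : ℤ[X]) (x : ℤ → K) :
    aeval (seqShift K K) (p.map (Int.castRingHom K)) x = aeval (seqShift ℤ K) p x := by
  ext n
  simp [aeval_seqShift_apply,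
    natDegree_map_eq_of_injective (f := Int.castRingHom K) Int.cast_injective]

end SeqShift

theorem fsT_eq_aeval (f : ℤ[X]) (x : ℤ → Torus) : fsT f x = aeval (seqShift ℤ Torus) f x := by
  ext n
  simp [fsT, aeval_seqShift_apply]

theorem eq_zero_of_norm_add_one_eq_mul {E : Type*} [NormedAddCommGroup E] {u : ℤ → E} {r : ℝ}
    (hr : ∀ n, ‖u (n + 1)‖ = r * ‖u n‖) (hu : Tendsto u cofinite (𝓝 0)) : u = 0 := by
  have hnorm : Tendsto (‖u ·‖) (atBot ⊔ atTop) (𝓝 0) := by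
    simpa [← Int.cofinite_eq] using hu.norm
  rw [tendsto_sup] at hnorm
  funext n
  rw [Pi.zero_apply, ← norm_le_zero_iff]
  rcases le_total 1 r with h1 | h1
  · refine Monotone.ge_of_tendsto (monotone_int_of_le_succ fun n => ?_) hnorm.2 n
    rw [hr]
    exact le_mul_of_one_le_left (norm_nonneg _) h1
  · refine Antitone.ge_of_tendsto (antitone_int_of_succ_le fun n => ?_) hnorm.1 n
    rw [hr]
    exact mul_le_of_le_one_left (norm_nonneg _) h1

section NormedField

variable {𝕜 : Type*} [NormedField 𝕜]

theorem eq_zero_of_aeval_seqShift_eq_zero_of_natDegree_eq_one {q : 𝕜[X]} (hq : q.natDegree = 1)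
    {u : ℤ → 𝕜} (hu : Tendsto u cofinite (𝓝 0)) (h : aeval (seqShift 𝕜 𝕜) q u = 0) : u = 0 := by
  have hq1 : q.coeff 1 ≠ 0 := by
    rw [← hq]
    exact leadingCoeff_ne_zero.mpr (ne_zero_of_natDegree_gt (hq ▸ one_pos))
  refine eq_zero_of_norm_add_one_eq_mul (r := ‖q.coeff 0 / q.coeff 1‖) (fun n => ?_) hu
  have hn := congrFun h n
  simp only [aeval_seqShift_apply, hq, Finset.sum_range_succ, Finset.sum_range_zero,
    Pi.zero_apply, smul_eq_mul, Nat.cast_zero, Nat.cast_one, add_zero, zero_add] at hn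
  have hrec : u (n + 1) = -(q.coeff 0 / q.coeff 1) * u n := by
    field_simp
    linear_combination hn
  rw [hrec, norm_mul, norm_neg]

theorem eq_zero_of_aeval_seqShift_eq_zero [IsAlgClosed 𝕜] {p : 𝕜[X]} (hp : p ≠ 0) {v : ℤ → 𝕜}
    (hv : Tendsto v cofinite (𝓝 0)) (h : aeval (seqShift 𝕜 𝕜) p v = 0) : v = 0 := by
  induction p using WfDvdMonoid.induction_on_irreducible generalizing v with
  | zero => exact absurd rfl hp
  | unit p hunit =>
    exact (Module.End.isUnit_iff _).mp (hunit.map (aeval (seqShift 𝕜 𝕜))) |>.injective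
      (h.trans (map_zero _).symm)
  | mul p i hp0 hi ih =>
    rw [map_mul, Module.End.mul_apply] at h
    have hdeg : i.natDegree = 1 := natDegree_eq_of_degree_eq_some
      (IsAlgClosed.degree_eq_one_of_irreducible 𝕜 hi)
    exact ih hp0 hv (eq_zero_of_aeval_seqShift_eq_zero_of_natDegree_eq_one hdeg
      (tendsto_aeval_seqShift p hv) h)

theorem sum_Ico_add_sub {G : Type*} [AddCommGroup G] (h : ℤ → G) (M k : ℕ) :
    ∑ n ∈ Finset.Ico (-(M : ℤ)) M, (h (n + k) - h n) =
      ∑ i ∈ Finset.range k, (h (M + i) - h (-M + i)) := by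
  have htel (n : ℤ) :
      h (n + k) - h n = ∑ i ∈ Finset.range k, (h (n + (i + 1 : ℕ)) - h (n + i)) := by
    rw [Finset.sum_range_sub (fun i : ℕ => h (n + i))]
    simp
  rw [Finset.sum_congr rfl fun n _ => htel n, Finset.sum_comm]
  refine Finset.sum_congr rfl fun i _ => ?_
  rw [← neg_sub, ← Finset.sum_Ico_int_sub M (fun n => h (n + i)), ← Finset.sum_neg_distrib]
  refine Finset.sum_congr rfl fun n _ => ?_
  rw [neg_sub]
  push_cast
  ring_nf

theorem tendsto_sum_Ico_add_sub {G : Type*} [AddCommGroup G] [TopologicalSpace G]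
    [IsTopologicalAddGroup G] {h : ℤ → G} (hh : Tendsto h cofinite (𝓝 0)) (k : ℕ) :
    Tendsto (fun M : ℕ => ∑ n ∈ Finset.Ico (-(M : ℤ)) M, (h (n + k) - h n)) atTop (𝓝 0) := by
  have hinj {g : ℕ → ℤ} (hg : Function.Injective g) : Tendsto (h ∘ g) atTop (𝓝 0) :=
    hh.comp (Nat.cofinite_eq_atTop ▸ hg.tendsto_cofinite)
  simp_rw [sum_Ico_add_sub]
  simpa using tendsto_finsetSum _ fun (i : ℕ) _ =>
    (hinj fun a b hab => by simpa using hab : Tendsto (fun M : ℕ => h (M + i)) atTop _).sub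
      (hinj fun a b hab => by simpa using hab : Tendsto (fun M : ℕ => h (-M + i)) atTop _)

theorem sum_aeval_seqShift_mul_zpow_eq_zero {p : 𝕜[X]} {θ : 𝕜} (hθ : ‖θ‖ = 1)
    (hp : aeval θ p = 0) {w : ℤ → 𝕜} (hw : Tendsto w cofinite (𝓝 0)) {s : Finset ℤ}
    (hs : ∀ n ∉ s, aeval (seqShift 𝕜 𝕜) p w n = 0) :
    ∑ n ∈ s, aeval (seqShift 𝕜 𝕜) p w n * θ ^ (-n) = 0 := by
  set c := aeval (seqShift 𝕜 𝕜) p w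
  set h : ℤ → 𝕜 := fun n => θ ^ (-n) * w n
  have hθ0 : θ ≠ 0 := norm_ne_zero_iff.mp (hθ ▸ one_ne_zero)
  have hh : Tendsto h cofinite (𝓝 0) := by
    rw [tendsto_zero_iff_norm_tendsto_zero] at hw ⊢
    simpa [h, norm_zpow, hθ] using hw
  have hpθ : ∑ k ∈ Finset.range (p.natDegree + 1), p.coeff k * θ ^ k = 0 := by
    simpa [aeval_eq_sum_range] using hp
  -- as `p(θ) = 0`, subtracting `h n` from every term leaves the sum unchanged
  have hpt (n : ℤ) : c n * θ ^ (-n) =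
      ∑ k ∈ Finset.range (p.natDegree + 1), p.coeff k * θ ^ k * (h (n + k) - h n) := by
    simp only [mul_sub, Finset.sum_sub_distrib]
    rw [← Finset.sum_mul, hpθ, zero_mul, sub_zero, show c n = _ from aeval_seqShift_apply p w n,
      Finset.sum_mul]
    refine Finset.sum_congr rfl fun k _ => ?_
    simp only [smul_eq_mul, h]
    rw [neg_add, zpow_add₀ hθ0, zpow_neg θ (k : ℤ), zpow_natCast]
    field_simp
  have hlim : Tendsto (fun M : ℕ => ∑ n ∈ Finset.Ico (-(M : ℤ)) M, c n * θ ^ (-n)) atTop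
      (𝓝 0) := by
    simp_rw [hpt, Finset.sum_comm (s := Finset.Ico _ _), ← Finset.mul_sum]
    simpa using tendsto_finsetSum _ fun k _ =>
      (tendsto_sum_Ico_add_sub hh k).const_mul (p.coeff k * θ ^ k)
  have hev : ∀ᶠ M : ℕ in atTop,
      ∑ n ∈ Finset.Ico (-(M : ℤ)) M, c n * θ ^ (-n) = ∑ n ∈ s, c n * θ ^ (-n) := by
    filter_upwards [Finset.tendsto_Ico_neg.eventually_ge_atTop s] with M hM
    exact (Finset.sum_subset hM fun n _ hn => by rw [hs n hn, zero_mul]).symm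
  exact tendsto_nhds_unique (tendsto_const_nhds.congr' (EventuallyEq.symm hev)) hlim

end NormedField

namespace Polynomial

theorem exists_dvd_X_pow_of_isUnit_toLaurent {R : Type*} [CommSemiring R] {a : R[X]}
    (h : IsUnit (toLaurent a)) :
    ∃ n : ℕ, a ∣ X ^ n := by
  obtain ⟨v, hv⟩ := h.exists_right_inv
  obtain ⟨n, b, hb⟩ := LaurentPolynomial.exists_T_pow v
  refine ⟨n, b, toLaurent_injective ?_⟩
  rw [map_mul, hb, ← mul_assoc, hv, one_mul, toLaurent_X_pow]

theorem irreducible_of_irreducible_toLaurent {R : Type*} [CommRing R] [IsDomain R] {p : R[X]}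
    (hp : Irreducible (toLaurent p)) (h0 : p.coeff 0 ≠ 0) : Irreducible p := by
  have hX : ¬ X ∣ p := by rwa [X_dvd_iff]
  have isUnit_of_dvd {a : R[X]} (hap : a ∣ p) (ha : IsUnit (toLaurent a)) : IsUnit a := by
    obtain ⟨n, hn⟩ := exists_dvd_X_pow_of_isUnit_toLaurent ha
    obtain ⟨i, -, hi⟩ := (dvd_prime_pow prime_X n).mp hn
    rcases i with _ | i
    · simpa using hi
    · exact absurd ((dvd_pow_self X i.succ_ne_zero).trans (hi.symm.dvd.trans hap)) hX
  refine ⟨fun hu => hp.not_isUnit (hu.map toLaurent), fun a b hab => ?_⟩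
  rcases hp.isUnit_or_isUnit (by rw [hab, map_mul]) with ha | hb
  · exact Or.inl (isUnit_of_dvd (hab ▸ dvd_mul_right a b) ha)
  · exact Or.inr (isUnit_of_dvd (hab ▸ dvd_mul_left b a) hb)

theorem dvd_of_aeval_eq_zero {f q : ℤ[X]} (hf : Irreducible f) (hdeg : f.natDegree ≠ 0)
    {θ : ℂ} (hfθ : aeval θ f = 0) (hqθ : aeval θ q = 0) : f ∣ q := by
  have hprim := hf.isPrimitive hdeg
  rw [IsPrimitive.Int.dvd_iff_map_cast_dvd_map_cast _ _ hprim]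
  have hcast (p : ℤ[X]) : aeval θ (p.map (Int.castRingHom ℚ)) = aeval θ p := by
    rw [← algebraMap_int_eq, aeval_map_algebraMap]
  exact ((IsPrimitive.Int.irreducible_iff_irreducible_map_cast hprim).mp hf).dvd_iff_aeval_eq_zero
    (by rwa [hcast]) |>.mp (by rwa [hcast])

variable {R : Type*} [CommRing R]

/-- `n ↦ q_{N - n}`: reading the coefficients backwards turns multiplication by `X` into the
shift. -/
def reflectSeq (N : ℤ) : R[X] →ₗ[R] (ℤ → R) where
  toFun q n := if n ≤ N then q.coeff (N - n).toNat else 0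
  map_add' p q := by
    ext n
    split_ifs <;> simp [*]
  map_smul' a q := by
    ext n
    split_ifs <;> simp [*]

theorem reflectSeq_apply (N : ℤ) (q : R[X]) (n : ℤ) :
    reflectSeq N q n = if n ≤ N then q.coeff (N - n).toNat else 0 := rfl

theorem reflectSeq_X_mul (N : ℤ) (q : R[X]) :
    reflectSeq N (X * q) = seqShift R R (reflectSeq N q) := by
  ext n
  simp only [reflectSeq_apply, seqShift, LinearMap.funLeft_apply]
  rcases lt_trichotomy n N with h | rfl | h
  · rw [if_pos h.le, if_pos (by omega), show (N - n).toNat = (N - (n + 1)).toNat + 1 by omega,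
      coeff_X_mul]
  · simp
  · rw [if_neg (by omega), if_neg (by omega)]

theorem reflectSeq_mul (N : ℤ) (p q : R[X]) :
    reflectSeq N (p * q) = aeval (seqShift R R) p (reflectSeq N q) := by
  induction p using Polynomial.induction_on with
  | C a => simp [C_mul']
  | add p₁ p₂ h₁ h₂ => simp [add_mul, h₁, h₂]
  | monomial k a ih =>
    rw [pow_succ', ← mul_assoc, mul_comm _ X, mul_assoc, mul_assoc, reflectSeq_X_mul,
      ← mul_assoc, ih, map_mul, map_mul, map_mul, aeval_X]
    simp only [Module.End.mul_apply]

theorem eventually_reflectSeq_eq_zero (N : ℤ) (q : R[X]) :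
    ∀ᶠ n in cofinite, reflectSeq N q n = 0 := by
  refine (Set.finite_Icc (N - q.natDegree) N).subset fun n hn => ?_
  by_contra hmem
  rw [Set.mem_Icc, not_and_or, not_le, not_le] at hmem
  refine hn ?_
  show reflectSeq N q n = 0
  rw [reflectSeq_apply]
  split_ifs with h
  · exact coeff_eq_zero_of_natDegree_lt (by omega)
  · rfl

end Polynomial

theorem exists_aeval_seqShift_eq_of_sum_eq_zero {f : ℤ[X]} (hf : Irreducible f)
    (hdeg : f.natDegree ≠ 0) {θ : ℂ} (hfθ : aeval θ f = 0) (hθ : θ ≠ 0) {c : ℤ → ℤ}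
    {s : Finset ℤ} (hc : ∀ n ∉ s, c n = 0) (hsum : ∑ n ∈ s, (c n : ℂ) * θ ^ (-n) = 0) :
    ∃ g : ℤ → ℤ, (∀ᶠ n in cofinite, g n = 0) ∧ aeval (seqShift ℤ ℤ) f g = c := by
  obtain ⟨N, hN⟩ := s.bddAbove
  set q : ℤ[X] := ∑ n ∈ s, monomial (N - n).toNat (c n)
  have hqc : reflectSeq N q = c := by
    ext m
    rw [reflectSeq_apply]
    split_ifs with hm
    · have hcoeff (n : ℤ) (hn : n ∈ s) :
          (monomial (N - n).toNat (c n)).coeff (N - m).toNat = if n = m then c n else 0 := by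
        have := hN hn
        rw [coeff_monomial]
        exact if_congr (by omega) rfl rfl
      rw [finsetSum_coeff, Finset.sum_congr rfl hcoeff, Finset.sum_ite_eq']
      split_ifs with hms
      · rfl
      · exact (hc m hms).symm
    · exact (hc m fun hms => hm (hN hms)).symm
  have hqθ : aeval θ q = 0 := by
    have hterm (n : ℤ) (hn : n ∈ s) :
        aeval θ (monomial (N - n).toNat (c n)) = θ ^ N * ((c n : ℂ) * θ ^ (-n)) := by
      rw [aeval_monomial, ← zpow_natCast, Int.toNat_of_nonneg (by linarith [hN hn]),
        sub_eq_add_neg, zpow_add₀ hθ, algebraMap_int_eq, eq_intCast]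
      ring
    rw [map_sum, Finset.sum_congr rfl hterm, ← Finset.mul_sum, hsum, mul_zero]
  obtain ⟨g, hg⟩ := dvd_of_aeval_eq_zero hf hdeg hfθ hqθ
  exact ⟨reflectSeq N g, eventually_reflectSeq_eq_zero N g, by rw [← reflectSeq_mul, ← hg, hqc]⟩

theorem UnitAddCircle.exists_coe_eq_and_norm_eq (z : UnitAddCircle) :
    ∃ x : ℝ, (x : UnitAddCircle) = z ∧ ‖x‖ = ‖z‖ := by
  obtain ⟨y, rfl⟩ := QuotientAddGroup.mk_surjective z
  refine ⟨y - round y, ?_, ?_⟩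
  · simp
  · rw [Real.norm_eq_abs, ← UnitAddCircle.norm_eq]

theorem exists_eq_intCast_of_aeval_seqShift_eq_intCast {f : ℤ[X]} (hf : Irreducible f)
    (hdeg : f.natDegree ≠ 0) {θ : ℂ} (hfθ : aeval θ f = 0) (hθ : ‖θ‖ = 1) {v : ℤ → ℂ}
    (hv : Tendsto v cofinite (𝓝 0)) {c : ℤ → ℤ}
    (hc : aeval (seqShift ℤ ℂ) f v = fun n => (c n : ℂ)) :
    ∃ g : ℤ → ℤ, v = fun n => (g n : ℂ) := by
  set F := f.map (Int.castRingHom ℂ)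
  have hF0 : F ≠ 0 := (Polynomial.map_ne_zero_iff Int.cast_injective).mpr hf.ne_zero
  have hFθ : aeval θ F = 0 := by
    rwa [show F = f.map (algebraMap ℤ ℂ) from rfl, aeval_map_algebraMap]
  have hFv : aeval (seqShift ℂ ℂ) F v = fun n => (c n : ℂ) := by
    rw [aeval_seqShift_map_intCast, hc]
  have hc0 : {n | c n ≠ 0}.Finite := by
    have h := tendsto_aeval_seqShift f hv
    rw [hc, tendsto_zero_iff_norm_tendsto_zero] at h
    refine eventually_cofinite.mp ?_
    filter_upwards [h.eventually (gt_mem_nhds one_pos)] with n hn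
    rw [Complex.norm_intCast] at hn
    exact Int.abs_lt_one_iff.mp (by exact_mod_cast hn)
  set s := hc0.toFinset
  have hs (n : ℤ) (hn : n ∉ s) : c n = 0 := by simpa [s] using hn
  have hsum := sum_aeval_seqShift_mul_zpow_eq_zero hθ hFθ hv (s := s) (by simpa [hFv] using hs)
  rw [hFv] at hsum
  obtain ⟨g, hg0, hgc⟩ := exists_aeval_seqShift_eq_of_sum_eq_zero hf hdeg hfθ
    (norm_ne_zero_iff.mp (hθ ▸ one_ne_zero)) hs hsum
  have hFg : aeval (seqShift ℂ ℂ) F (fun n => (g n : ℂ)) = fun n => (c n : ℂ) := by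
    ext n
    rw [aeval_seqShift_map_intCast]
    simpa [hgc] using ((Int.castAddHom ℂ).map_aeval_seqShift_apply f g n).symm
  have hg0' : Tendsto (fun n => (g n : ℂ)) cofinite (𝓝 0) :=
    tendsto_const_nhds.congr' (by filter_upwards [hg0] with n hn; simp [hn])
  refine ⟨g, sub_eq_zero.mp (eq_zero_of_aeval_seqShift_eq_zero hF0 ?_ ?_)⟩
  · rw [← sub_zero 0]
    exact hv.sub hg0'
  · rw [map_sub, hFv, hFg, sub_self]

theorem mem_Xf_iff {f : ℤ[X]} {x : ℤ → Torus} : x ∈ Xf f ↔ aeval (seqShift ℤ Torus) f x = 0 := by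
  rw [← fsT_eq_aeval, funext_iff]
  rfl

theorem sub_mem_Xf {f : ℤ[X]} {x y : ℤ → Torus} (hx : x ∈ Xf f) (hy : y ∈ Xf f) :
    x - y ∈ Xf f := by
  rw [mem_Xf_iff] at *
  rw [map_sub, hx, hy, sub_zero]

theorem eq_zero_of_mem_Xf_of_tendsto_zero {f : ℤ[X]} (hf : Irreducible f) (hdeg : f.natDegree ≠ 0)
    {θ : ℂ} (hfθ : aeval θ f = 0) (hθ : ‖θ‖ = 1) {w : ℤ → Torus} (hw : w ∈ Xf f)
    (hw0 : Tendsto w cofinite (𝓝 0)) : w = 0 := by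
  choose wt hwt_coe hwt_norm using fun n => UnitAddCircle.exists_coe_eq_and_norm_eq (w n)
  have hwt0 : Tendsto (fun n => (wt n : ℂ)) cofinite (𝓝 0) := by
    rw [tendsto_zero_iff_norm_tendsto_zero] at hw0 ⊢
    simpa [← hwt_norm] using hw0
  have hint (n : ℤ) : ∃ z : ℤ, (z : ℝ) = aeval (seqShift ℤ ℝ) f wt n := by
    have h := (QuotientAddGroup.mk' _ : ℝ →+ Torus).map_aeval_seqShift_apply f wt n
    simp only [QuotientAddGroup.mk'_apply] at h
    rw [show (fun m => (wt m : Torus)) = w from funext hwt_coe, mem_Xf_iff.mp hw] at h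
    obtain ⟨z, hz⟩ := (AddCircle.coe_eq_zero_iff 1).mp h
    exact ⟨z, by simpa using hz⟩
  choose c hc using hint
  have hcC : aeval (seqShift ℤ ℂ) f (fun n => (wt n : ℂ)) = fun n => (c n : ℂ) := by
    ext n
    simpa [← hc n] using (Complex.ofRealHom.toAddMonoidHom.map_aeval_seqShift_apply f wt n).symm
  obtain ⟨g, hg⟩ := exists_eq_intCast_of_aeval_seqShift_eq_intCast hf hdeg hfθ hθ hwt0 hcC
  ext n
  have hwtg : wt n = g n := by exact_mod_cast congrFun hg n
  rw [← hwt_coe n, hwtg]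
  simp

theorem apply_zpow_apply {Y α : Type*} {T : Equiv.Perm Y} {φ : Y → ℤ → α}
    (hφ : ∀ y n, φ (T y) n = φ y (n + 1)) (y : Y) (k n : ℤ) :
    φ ((T ^ k) y) n = φ y (n + k) := by
  induction k using Int.induction_on generalizing n with
  | zero => simp
  | succ k ih =>
    rw [add_comm, zpow_one_add, Equiv.Perm.mul_apply, hφ, ih, add_assoc, add_comm 1]
  | pred k ih =>
    have h := hφ ((T ^ (-(k : ℤ) - 1)) y) (n - 1)
    rw [sub_add_cancel, ← Equiv.Perm.mul_apply, ← zpow_one_add, add_sub_cancel, ih] at h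
    rw [← h]
    ring_nf

theorem tendsto_sub_of_homoclinicPair {Y G : Type*} [MetricSpace Y] [CompactSpace Y]
    [SeminormedAddCommGroup G] {T : Equiv.Perm Y} {φ : Y → ℤ → G} (hφc : Continuous φ)
    (hφ : ∀ y n, φ (T y) n = φ y (n + 1)) {y y' : Y} (h : HomoclinicPair T y y') :
    Tendsto (φ y - φ y') cofinite (𝓝 0) := by
  have hu : UniformContinuous (φ · 0) :=
    CompactSpace.uniformContinuous_of_continuous ((continuous_apply 0).comp hφc)
  have h' := Tendsto.comp hu ((tendsto_uniformity_iff_dist_tendsto_zero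
    (f := fun n : ℤ => ((T ^ n) y, (T ^ n) y'))).mpr h)
  rw [tendsto_uniformity_iff_dist_tendsto_zero] at h'
  simp only [Function.comp_apply, apply_zpow_apply hφ, zero_add, dist_eq_norm] at h'
  exact tendsto_iff_norm_sub_tendsto_zero.mpr (by simpa using h')

theorem equivariant_image_singleton_general (f : Polynomial ℤ) (hm : 1 ≤ f.natDegree)
    (h0 : f.coeff 0 ≠ 0)
    (hirr : Irreducible (Polynomial.toLaurent f))
    (hnonhyp : ∃ θ : ℂ, Polynomial.aeval θ f = 0 ∧ ‖θ‖ = 1)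
    (Y : Type*) [MetricSpace Y] [CompactSpace Y]
    (T : Equiv.Perm Y)
    (htrans : ∃ y : Y, Dense {y' : Y | HomoclinicPair T y y'})
    (φ : Y → (ℤ → Torus)) (hφc : Continuous φ)
    (hφX : ∀ y, φ y ∈ Xf f)
    (hφe : ∀ y, φ (T y) = shiftT (φ y)) :
    ∃ xbar : ℤ → Torus, xbar ∈ Xf f ∧ shiftT xbar = xbar ∧ ∀ y, φ y = xbar := by
  obtain ⟨θ, hθ, hθ1⟩ := hnonhyp
  obtain ⟨y₀, hdense⟩ := htrans
  have hf : Irreducible f := irreducible_of_irreducible_toLaurent hirr h0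
  have hconst (y : Y) (hy : HomoclinicPair T y₀ y) : φ y = φ y₀ := by
    have hdiff := tendsto_sub_of_homoclinicPair hφc (fun y n => congrFun (hφe y) n) hy
    exact (sub_eq_zero.mp (eq_zero_of_mem_Xf_of_tendsto_zero hf (by omega) hθ hθ1
      (sub_mem_Xf (hφX y₀) (hφX y)) hdiff)).symm
  have hφ : φ = fun _ => φ y₀ := Continuous.ext_on hdense hφc continuous_const hconst
  exact ⟨φ y₀, hφX y₀, by rw [← hφe y₀, hφ], fun y => congrFun hφ y⟩

/-- in the nonhyperbolic case, if `T` is a homeomorphism of a compact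
metrizable space `Y` whose homoclinic relation is topologically transitive, then every
continuous `(T, α_f)`-equivariant map `φ : Y → X_f` has as image a single fixed point. -/
theorem equivariant_image_singleton (f : Polynomial ℤ) (hm : 1 ≤ f.natDegree)
    (hlead : 0 < f.leadingCoeff) (h0 : f.coeff 0 ≠ 0)
    (hirr : Irreducible (Polynomial.toLaurent f)) (hnc : Noncyclotomic f)
    (hnonhyp : ∃ θ : ℂ, Polynomial.aeval θ f = 0 ∧ ‖θ‖ = 1)
    (Y : Type*) [MetricSpace Y] [CompactSpace Y]
    (T : Equiv.Perm Y) (hT : Continuous T) (hT' : Continuous T.symm)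
    (htrans : ∃ y : Y, Dense {y' : Y | HomoclinicPair T y y'})
    (φ : Y → (ℤ → Torus)) (hφc : Continuous φ)
    (hφX : ∀ y, φ y ∈ Xf f)
    (hφe : ∀ y, φ (T y) = shiftT (φ y)) :
    ∃ xbar : ℤ → Torus, xbar ∈ Xf f ∧ shiftT xbar = xbar ∧ ∀ y, φ y = xbar :=
  equivariant_image_singleton_general f hm h0 hirr hnonhyp Y T htrans φ hφc hφX hφe

end
end

section
/- Suppose f is irreducible in ℤ[u^{±1}] and noncyclotomic. Then there exists a constant c > 0 such that ‖ξ̄*(f(σ̄)(w))‖_∞ ≤ c·‖w‖_∞ for every w ∈ W_f. -/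
open Filter Topology Polynomial

noncomputable section

/-- Bounded integer sequences. -/
def BddZ (v : ℤ → ℤ) : Prop := ∃ B : ℤ, ∀ n, |v n| ≤ B

/-- `ξ̄*(v)_k = ∑_{n≥0} v_n w⁻_{k-n} + ∑_{n<0} v_n w⁺_{k-n}`. -/
def xiStar (wp wm : ℤ → ℝ) (v : ℤ → ℤ) : ℤ → ℝ :=
  fun k => ∑' n : ℤ, (v n : ℝ) * (if 0 ≤ n then wm (k - n) else wp (k - n))

/-- Membership in `W_f = f(σ̄)^{-1}(ℓ^∞(ℤ,ℤ)) ⊆ ℓ^∞(ℤ,ℝ)`. -/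
def InWf (f : Polynomial ℤ) (w : ℤ → ℝ) : Prop :=
  Bdd w ∧ ∀ n, ∃ z : ℤ, fsR f w n = (z : ℝ)

/-- Membership in `V_f = f(σ̄)(W_f)` for an integer sequence. -/
def InVf (f : Polynomial ℤ) (v : ℤ → ℤ) : Prop :=
  ∃ w : ℤ → ℝ, Bdd w ∧ ∀ n, fsR f w n = (v n : ℝ)

private lemma sum_shiftX (ψ : ℤ → ℝ) (a b c : ℤ) :
    ∑ n ∈ Finset.Icc a b, ψ (n + c) = ∑ m ∈ Finset.Icc (a + c) (b + c), ψ m := by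
  refine Finset.sum_nbij' (fun n => n + c) (fun m => m - c) ?_ ?_ ?_ ?_ ?_ <;>
    intros <;> simp_all [Finset.mem_Icc] <;> omega

private lemma sum_reflectX (ψ : ℤ → ℝ) (a b c : ℤ) :
    ∑ m ∈ Finset.Icc a b, ψ (c - m) = ∑ t ∈ Finset.Icc (c - b) (c - a), ψ t := by
  refine Finset.sum_nbij' (fun m => c - m) (fun t => c - t) ?_ ?_ ?_ ?_ ?_ <;>
    intros <;> simp_all [Finset.mem_Icc] <;> omega

private lemma sum_Icc_rangeX (ψ : ℤ → ℝ) (a : ℤ) (d : ℕ) :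
    ∑ t ∈ Finset.Icc a (a + d - 1), ψ t = ∑ i ∈ Finset.range d, ψ (a + i) := by
  refine Finset.sum_nbij' (i := fun t => (t - a).toNat) (j := fun i => a + (i:ℤ))
    ?_ ?_ ?_ ?_ ?_ <;> intros <;> simp_all [Finset.mem_Icc] <;> omega

private lemma tendsto_Icc_sumX {u : ℤ → ℝ} {s : ℝ} (h : HasSum u s) :
    Tendsto (fun N : ℕ => ∑ n ∈ Finset.Icc (-(N:ℤ)) N, u n) atTop (𝓝 s) := by
  have h2 : Tendsto (fun N : ℕ => Finset.Icc (-(N:ℤ)) N) atTop atTop := by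
    apply Filter.tendsto_atTop_finset_of_monotone
    · intro a b hab
      apply Finset.Icc_subset_Icc <;> simp <;> exact_mod_cast hab
    · intro x
      refine ⟨x.natAbs, ?_⟩
      rw [Finset.mem_Icc]; omega
  exact h.comp h2

private lemma sum_splitX (ψ : ℤ → ℝ) (N j : ℤ) (hj : 0 ≤ j) (hN : 0 ≤ N) :
    ∑ m ∈ Finset.Icc (-N+j) (N+j), ψ m
      = ∑ m ∈ Finset.Icc (-N) N, ψ m + ∑ m ∈ Finset.Icc (N+1) (N+j), ψ m
        - ∑ m ∈ Finset.Icc (-N) (-N+j-1), ψ m := by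
  have h1 : Finset.Icc (-N) (N+j) = Finset.Icc (-N) (-N+j-1) ∪ Finset.Icc (-N+j) (N+j) := by
    ext t; simp only [Finset.mem_Icc, Finset.mem_union]; omega
  have h2 : Finset.Icc (-N) (N+j) = Finset.Icc (-N) N ∪ Finset.Icc (N+1) (N+j) := by
    ext t; simp only [Finset.mem_Icc, Finset.mem_union]; omega
  have d1 : Disjoint (Finset.Icc (-N) (-N+j-1)) (Finset.Icc (-N+j) (N+j)) := by
    simp only [Finset.disjoint_left, Finset.mem_Icc]; omega
  have d2 : Disjoint (Finset.Icc (-N) N) (Finset.Icc (N+1) (N+j)) := by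
    simp only [Finset.disjoint_left, Finset.mem_Icc]; omega
  have e1 := Finset.sum_union d1 (f := ψ)
  have e2 := Finset.sum_union d2 (f := ψ)
  rw [← h1] at e1; rw [← h2] at e2
  linarith

/-- there is `c > 0` with `‖ξ̄*(f(σ̄)(w))‖_∞ ≤ c ⬝ ‖w‖_∞` for all `w ∈ W_f`. -/
theorem xiStar_bound (f : Polynomial ℤ) (hm : 1 ≤ f.natDegree)
    (hlead : 0 < f.leadingCoeff) (h0 : f.coeff 0 ≠ 0)
    (hirr : Irreducible (Polynomial.toLaurent f)) (hnc : Noncyclotomic f)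
    (wp wm : ℤ → ℝ) (hwp : IsWplus f wp) (hwm : IsWminus f wm) :
    ∃ c > (0:ℝ), ∀ (w : ℤ → ℝ) (v : ℤ → ℤ) (B : ℝ),
      InWf f w → (∀ n, (v n : ℝ) = fsR f w n) → (∀ n, |w n| ≤ B) →
      ∀ k, |xiStar wp wm v k| ≤ c * B := by
  classical
  obtain ⟨Bp, hBp⟩ := hwp.1
  obtain ⟨Bm, hBm⟩ := hwm.1
  have hBp0 : 0 ≤ Bp := le_trans (abs_nonneg _) (hBp 0)
  have hBm0 : 0 ≤ Bm := le_trans (abs_nonneg _) (hBm 0)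
  set d := f.natDegree with hd
  set F : ℕ → ℝ := fun j => (f.coeff j : ℝ) with hF
  set L : ℝ := ∑ j ∈ Finset.range (d+1), |F j| with hLdef
  have hL0 : 0 ≤ L := Finset.sum_nonneg fun _ _ => abs_nonneg _
  set C0 : ℝ := 1 + d * (1 + L * (Bp + Bm)) with hC0
  have hC0pos : 0 < C0 := by
    have h1 : 0 ≤ L * (Bp + Bm) := mul_nonneg hL0 (by linarith)
    have h2 : (0:ℝ) ≤ (d:ℝ) := Nat.cast_nonneg d
    nlinarith
  refine ⟨C0, hC0pos, ?_⟩
  intro w v B hw hv hB k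
  have hB0 : 0 ≤ B := le_trans (abs_nonneg _) (hB 0)
  set g : ℤ → ℝ := fun n => if 0 ≤ n then wm (k - n) else wp (k - n) with hg
  have hxi : xiStar wp wm v k = ∑' n : ℤ, (v n : ℝ) * g n := rfl
  have hgB : ∀ n, |g n| ≤ Bp + Bm := by
    intro n
    by_cases h : 0 ≤ n
    · simp only [hg, if_pos h]; exact le_trans (hBm _) (by linarith)
    · simp only [hg, if_neg h]; exact le_trans (hBp _) (by linarith)
  by_cases hs : Summable (fun n : ℤ => (v n : ℝ) * g n)
  case neg =>
    rw [hxi, tsum_eq_zero_of_not_summable hs]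
    simpa using mul_nonneg (le_of_lt hC0pos) hB0
  -- summable case
  set H : ℤ → ℝ := fun m => ∑ j ∈ Finset.range (d+1), F j * g (m - j) with hH
  have hHdelta : ∀ m : ℤ, m < 0 ∨ (d:ℤ) ≤ m → H m = (if m = k then 1 else 0) := by
    intro m hcase
    have key : H m = vDelta (k - m) := by
      rcases hcase with hneg | hge
      · have : H m = fsR f wp (k - m) := by
          simp only [hH, fsR, ← hd]
          refine Finset.sum_congr rfl fun j hj => ?_
          have hj' : (j:ℤ) ≥ 0 := Int.ofNat_nonneg j
          have harg : ¬ (0 ≤ m - (j:ℤ)) := by omega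
          simp only [hg, if_neg harg]
          congr 1; ring
        rw [this, hwp.2.1]
      · have : H m = fsR f wm (k - m) := by
          simp only [hH, fsR, ← hd]
          refine Finset.sum_congr rfl fun j hj => ?_
          have hj' : (j:ℤ) ≤ (d:ℤ) := by
            rw [Finset.mem_range] at hj; omega
          have harg : (0:ℤ) ≤ m - (j:ℤ) := by omega
          simp only [hg, if_pos harg]
          congr 1; ring
        rw [this, hwm.2.1]
    rw [key]
    by_cases hmk : m = k <;> simp [vDelta, hmk, sub_eq_zero]
    · omega
  -- bound on H
  have hHbound : ∀ m : ℤ, |H m| ≤ L * (Bp + Bm) := by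
    intro m
    calc |H m| ≤ ∑ j ∈ Finset.range (d+1), |F j * g (m - j)| := Finset.abs_sum_le_sum_abs _ _
    _ ≤ ∑ j ∈ Finset.range (d+1), |F j| * (Bp + Bm) := by
        refine Finset.sum_le_sum fun j _ => ?_
        rw [abs_mul]
        exact mul_le_mul_of_nonneg_left (hgB _) (abs_nonneg _)
    _ = L * (Bp + Bm) := by rw [hLdef, Finset.sum_mul]
  set R : ℤ → ℝ := fun m => H m - (if m = k then 1 else 0) with hR
  have hR0 : ∀ m : ℤ, m < 0 ∨ (d:ℤ) ≤ m → R m = 0 := by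
    intro m hcase; simp [hR, hHdelta m hcase]
  have hRb : ∀ m : ℤ, |R m| ≤ 1 + L * (Bp + Bm) := by
    intro m
    have : |R m| ≤ |H m| + |(if m = k then (1:ℝ) else 0)| := abs_sub _ _
    have h2 : |(if m = k then (1:ℝ) else 0)| ≤ 1 := by
      by_cases hmk : m = k <;> simp [hmk]
    linarith [hHbound m]
  -- main term bound
  have hMain : ∀ N : ℕ, d ≤ N →
      |∑ m ∈ Finset.Icc (-(N:ℤ)) N, w m * H m| ≤ C0 * B := by
    intro N hN
    have hsplit : ∀ m : ℤ, w m * H m = (if m = k then w m else 0) + w m * R m := by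
      intro m
      by_cases hmk : m = k <;> simp [hR, hmk] <;> ring
    rw [Finset.sum_congr rfl fun m _ => hsplit m, Finset.sum_add_distrib]
    have h1 : |∑ m ∈ Finset.Icc (-(N:ℤ)) N, (if m = k then w m else 0)| ≤ B := by
      rw [Finset.sum_ite_eq' (Finset.Icc (-(N:ℤ)) N) k w]
      by_cases hk : k ∈ Finset.Icc (-(N:ℤ)) N <;> simp [hk]
      · exact hB k
      · exact hB0
    have h2 : |∑ m ∈ Finset.Icc (-(N:ℤ)) N, w m * R m| ≤ d * (B * (1 + L * (Bp + Bm))) := by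
      have hsub : Finset.Icc (0:ℤ) ((d:ℤ) - 1) ⊆ Finset.Icc (-(N:ℤ)) N := by
        intro t ht
        simp only [Finset.mem_Icc] at *
        omega
      have heq : ∑ m ∈ Finset.Icc (-(N:ℤ)) N, w m * R m
          = ∑ m ∈ Finset.Icc (0:ℤ) ((d:ℤ) - 1), w m * R m := by
        refine (Finset.sum_subset hsub fun m hmem hnot => ?_).symm
        have : m < 0 ∨ (d:ℤ) ≤ m := by
          simp only [Finset.mem_Icc] at hmem hnot
          omega
        rw [hR0 m this, mul_zero]
      rw [heq]
      calc |∑ m ∈ Finset.Icc (0:ℤ) ((d:ℤ) - 1), w m * R m|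
          ≤ ∑ m ∈ Finset.Icc (0:ℤ) ((d:ℤ) - 1), |w m * R m| := Finset.abs_sum_le_sum_abs _ _
        _ ≤ ∑ m ∈ Finset.Icc (0:ℤ) ((d:ℤ) - 1), B * (1 + L * (Bp + Bm)) := by
            refine Finset.sum_le_sum fun m _ => ?_
            rw [abs_mul]
            exact mul_le_mul (hB m) (hRb m) (abs_nonneg _) hB0
        _ = (Finset.Icc (0:ℤ) ((d:ℤ) - 1)).card * (B * (1 + L * (Bp + Bm))) := by
            rw [Finset.sum_const, nsmul_eq_mul]
        _ = d * (B * (1 + L * (Bp + Bm))) := by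
            congr 1
            rw [Int.card_Icc]
            simp
    calc |_ + _| ≤ _ + _ := abs_add_le _ _
    _ ≤ B + d * (B * (1 + L * (Bp + Bm))) := add_le_add h1 h2
    _ = C0 * B := by rw [hC0]; ring
  set S : ℕ → ℝ := fun N => ∑ n ∈ Finset.Icc (-(N:ℤ)) N, (v n : ℝ) * g n with hSdef
  set M : ℕ → ℝ := fun N => ∑ m ∈ Finset.Icc (-(N:ℤ)) N, w m * H m with hMdef
  set P : ℕ → ℝ := fun N => ∑ t ∈ Finset.Icc ((k:ℤ) - N) (k - N + d - 1), |wm t| with hPdef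
  set Q : ℕ → ℝ := fun N => ∑ t ∈ Finset.Icc ((k:ℤ) + N + 1) (k + N + d), |wp t| with hQdef
  have hP0 : ∀ N, 0 ≤ P N := fun N => Finset.sum_nonneg fun _ _ => abs_nonneg _
  have hQ0 : ∀ N, 0 ≤ Q N := fun N => Finset.sum_nonneg fun _ _ => abs_nonneg _
  set psi : ℕ → ℤ → ℝ := fun j m => F j * w m * g (m - (j:ℤ)) with hpsi
  have hEdge : ∀ N : ℕ, d ≤ N → |S N - M N| ≤ L * B * (P N + Q N) := by
    intro N hN
    have hNz : (d:ℤ) ≤ (N:ℤ) := by exact_mod_cast hN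
    -- step 1: S N as a double sum, reorganized
    have step1 : S N = ∑ j ∈ Finset.range (d+1),
        ∑ m ∈ Finset.Icc (-(N:ℤ) + j) ((N:ℤ) + j), psi j m := by
      have e1 : S N = ∑ n ∈ Finset.Icc (-(N:ℤ)) N,
          ∑ j ∈ Finset.range (d+1), F j * w (n + j) * g n := by
        refine Finset.sum_congr rfl fun n _ => ?_
        rw [hv n]
        show fsR f w n * g n = _
        rw [fsR, ← hd, Finset.sum_mul]
      rw [e1, Finset.sum_comm]
      refine Finset.sum_congr rfl fun j _ => ?_
      have e2 : ∀ n : ℤ, F j * w (n + j) * g n = psi j (n + j) := by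
        intro n
        simp only [hpsi, add_sub_cancel_right]
      rw [Finset.sum_congr rfl fun n _ => e2 n, sum_shiftX]
    -- step 2: split each inner sum
    have step2 : S N = M N + ∑ j ∈ Finset.range (d+1),
        (∑ m ∈ Finset.Icc ((N:ℤ)+1) ((N:ℤ)+j), psi j m
          - ∑ m ∈ Finset.Icc (-(N:ℤ)) (-(N:ℤ)+j-1), psi j m) := by
      rw [step1]
      have e3 : ∀ j ∈ Finset.range (d+1),
          ∑ m ∈ Finset.Icc (-(N:ℤ) + j) ((N:ℤ) + j), psi j m
            = ∑ m ∈ Finset.Icc (-(N:ℤ)) (N:ℤ), psi j m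
              + (∑ m ∈ Finset.Icc ((N:ℤ)+1) ((N:ℤ)+j), psi j m
                - ∑ m ∈ Finset.Icc (-(N:ℤ)) (-(N:ℤ)+j-1), psi j m) := by
        intro j _
        have := sum_splitX (psi j) (N:ℤ) (j:ℤ) (Int.ofNat_nonneg j) (Int.ofNat_nonneg N)
        linarith
      rw [Finset.sum_congr rfl e3, Finset.sum_add_distrib]
      congr 1
      rw [Finset.sum_comm]
      refine Finset.sum_congr rfl fun m _ => ?_
      rw [hH, Finset.mul_sum]
      refine Finset.sum_congr rfl fun j _ => ?_
      simp only [hpsi]; ring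
    -- step 3: bound the edge terms
    have hAbound : ∀ j ∈ Finset.range (d+1),
        |∑ m ∈ Finset.Icc ((N:ℤ)+1) ((N:ℤ)+j), psi j m| ≤ |F j| * (B * P N) := by
      intro j hj
      rw [Finset.mem_range] at hj
      calc |∑ m ∈ Finset.Icc ((N:ℤ)+1) ((N:ℤ)+j), psi j m|
          ≤ ∑ m ∈ Finset.Icc ((N:ℤ)+1) ((N:ℤ)+j), |psi j m| := Finset.abs_sum_le_sum_abs _ _
        _ ≤ ∑ m ∈ Finset.Icc ((N:ℤ)+1) ((N:ℤ)+j), |F j| * B * |wm (((k:ℤ) + j) - m)| := by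
            refine Finset.sum_le_sum fun m hmem => ?_
            rw [Finset.mem_Icc] at hmem
            have h0 : (0:ℤ) ≤ m - j := by omega
            have hgm : g (m - (j:ℤ)) = wm (((k:ℤ) + j) - m) := by
              simp only [hg, if_pos h0]
              congr 1; ring
            simp only [hpsi, abs_mul, hgm]
            exact mul_le_mul_of_nonneg_right
              (mul_le_mul_of_nonneg_left (hB m) (abs_nonneg _)) (abs_nonneg _)
        _ = |F j| * B * ∑ m ∈ Finset.Icc ((N:ℤ)+1) ((N:ℤ)+j), |wm (((k:ℤ) + j) - m)| := by
            rw [Finset.mul_sum]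
        _ = |F j| * B * ∑ t ∈ Finset.Icc ((k:ℤ)+j-((N:ℤ)+j)) ((k:ℤ)+j-((N:ℤ)+1)), |wm t| := by
            rw [sum_reflectX (fun t => |wm t|)]
        _ ≤ |F j| * (B * P N) := by
            rw [mul_assoc]
            refine mul_le_mul_of_nonneg_left (mul_le_mul_of_nonneg_left ?_ hB0) (abs_nonneg _)
            refine Finset.sum_le_sum_of_subset_of_nonneg ?_ fun _ _ _ => abs_nonneg _
            intro t ht
            rw [Finset.mem_Icc] at *
            omega
    have hBbound : ∀ j ∈ Finset.range (d+1),
        |∑ m ∈ Finset.Icc (-(N:ℤ)) (-(N:ℤ)+j-1), psi j m| ≤ |F j| * (B * Q N) := by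
      intro j hj
      rw [Finset.mem_range] at hj
      calc |∑ m ∈ Finset.Icc (-(N:ℤ)) (-(N:ℤ)+j-1), psi j m|
          ≤ ∑ m ∈ Finset.Icc (-(N:ℤ)) (-(N:ℤ)+j-1), |psi j m| := Finset.abs_sum_le_sum_abs _ _
        _ ≤ ∑ m ∈ Finset.Icc (-(N:ℤ)) (-(N:ℤ)+j-1), |F j| * B * |wp (((k:ℤ) + j) - m)| := by
            refine Finset.sum_le_sum fun m hmem => ?_
            rw [Finset.mem_Icc] at hmem
            have h0 : ¬ ((0:ℤ) ≤ m - j) := by omega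
            have hgm : g (m - (j:ℤ)) = wp (((k:ℤ) + j) - m) := by
              simp only [hg, if_neg h0]
              congr 1; ring
            simp only [hpsi, abs_mul, hgm]
            exact mul_le_mul_of_nonneg_right
              (mul_le_mul_of_nonneg_left (hB m) (abs_nonneg _)) (abs_nonneg _)
        _ = |F j| * B * ∑ m ∈ Finset.Icc (-(N:ℤ)) (-(N:ℤ)+j-1), |wp (((k:ℤ) + j) - m)| := by
            rw [Finset.mul_sum]
        _ = |F j| * B * ∑ t ∈ Finset.Icc ((k:ℤ)+j-(-(N:ℤ)+j-1)) ((k:ℤ)+j-(-(N:ℤ))), |wp t| := by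
            rw [sum_reflectX (fun t => |wp t|)]
        _ ≤ |F j| * (B * Q N) := by
            rw [mul_assoc]
            refine mul_le_mul_of_nonneg_left (mul_le_mul_of_nonneg_left ?_ hB0) (abs_nonneg _)
            refine Finset.sum_le_sum_of_subset_of_nonneg ?_ fun _ _ _ => abs_nonneg _
            intro t ht
            rw [Finset.mem_Icc] at *
            omega
    have : S N - M N = ∑ j ∈ Finset.range (d+1),
        (∑ m ∈ Finset.Icc ((N:ℤ)+1) ((N:ℤ)+j), psi j m
          - ∑ m ∈ Finset.Icc (-(N:ℤ)) (-(N:ℤ)+j-1), psi j m) := by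
      rw [step2]; ring
    rw [this]
    calc |∑ j ∈ Finset.range (d+1), _| ≤ ∑ j ∈ Finset.range (d+1),
          |∑ m ∈ Finset.Icc ((N:ℤ)+1) ((N:ℤ)+j), psi j m
            - ∑ m ∈ Finset.Icc (-(N:ℤ)) (-(N:ℤ)+j-1), psi j m| := Finset.abs_sum_le_sum_abs _ _
      _ ≤ ∑ j ∈ Finset.range (d+1), (|F j| * (B * P N) + |F j| * (B * Q N)) := by
          refine Finset.sum_le_sum fun j hj => ?_
          exact le_trans (abs_sub _ _) (add_le_add (hAbound j hj) (hBbound j hj))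
      _ = L * B * (P N + Q N) := by
          rw [hLdef]
          rw [Finset.sum_congr rfl (fun j _ => by ring :
            ∀ j ∈ Finset.range (d+1), |F j| * (B * P N) + |F j| * (B * Q N)
              = |F j| * (B * (P N + Q N))), ← Finset.sum_mul]
          ring
  -- limits
  have hSlim : Tendsto S atTop (𝓝 (∑' n : ℤ, (v n : ℝ) * g n)) := tendsto_Icc_sumX hs.hasSum
  have hnegbot : Tendsto (fun N : ℕ => -(N:ℤ)) atTop atBot :=
    tendsto_neg_atTop_atBot.comp tendsto_natCast_atTop_atTop
  have hPlim : Tendsto P atTop (𝓝 0) := by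
    have hterm : ∀ i : ℕ, Tendsto (fun N : ℕ => |wm ((k:ℤ) - N + i)|) atTop (𝓝 0) := by
      intro i
      have hbot : Tendsto (fun N : ℕ => (k:ℤ) - N + i) atTop atBot := by
        have h2 : Tendsto (fun N : ℕ => ((k:ℤ) + i) + -(N:ℤ)) atTop atBot :=
          tendsto_atBot_add_const_left _ _ hnegbot
        exact h2.congr (fun N => by ring)
      have := (hwm.2.2.comp hbot).abs
      simpa using this
    have hsum := tendsto_finset_sum (Finset.range d) (fun i _ => hterm i)
    simp only [Finset.sum_const_zero] at hsum
    refine hsum.congr fun N => ?_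
    rw [← sum_Icc_rangeX (fun t => |wm t|) ((k:ℤ) - N) d]
  have hQlim : Tendsto Q atTop (𝓝 0) := by
    have hterm : ∀ i : ℕ, Tendsto (fun N : ℕ => |wp ((k:ℤ) + N + 1 + i)|) atTop (𝓝 0) := by
      intro i
      have htop : Tendsto (fun N : ℕ => (k:ℤ) + N + 1 + i) atTop atTop := by
        have h2 : Tendsto (fun N : ℕ => ((k:ℤ) + 1 + i) + (N:ℤ)) atTop atTop :=
          tendsto_atTop_add_const_left _ _ tendsto_natCast_atTop_atTop
        exact h2.congr (fun N => by ring)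
      have := (hwp.2.2.comp htop).abs
      simpa using this
    have hsum := tendsto_finset_sum (Finset.range d) (fun i _ => hterm i)
    simp only [Finset.sum_const_zero] at hsum
    refine hsum.congr fun N => ?_
    rw [← sum_Icc_rangeX (fun t => |wp t|) ((k:ℤ) + N + 1) d]
    have : Finset.Icc ((k:ℤ) + N + 1) ((k:ℤ) + N + 1 + d - 1)
        = Finset.Icc ((k:ℤ) + N + 1) ((k:ℤ) + N + d) := by
      congr 1; ring
    rw [this]
  -- conclusion
  have hev : ∀ᶠ N in atTop, |S N| ≤ C0 * B + L * B * (P N + Q N) := by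
    filter_upwards [eventually_ge_atTop d] with N hN
    have h1 := hMain N hN
    have h2 := hEdge N hN
    have e : |S N| = |M N + (S N - M N)| := by congr 1; ring
    have h3 := abs_add_le (M N) (S N - M N)
    rw [e]
    linarith
  have hrhs : Tendsto (fun N => C0 * B + L * B * (P N + Q N)) atTop (𝓝 (C0 * B)) := by
    have h4 : Tendsto (fun N => P N + Q N) atTop (𝓝 0) := by simpa using hPlim.add hQlim
    have h5 : Tendsto (fun N => L * B * (P N + Q N)) atTop (𝓝 0) := by
      simpa using h4.const_mul (L * B)
    simpa using (tendsto_const_nhds (x := C0 * B) (f := atTop)).add h5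
  rw [hxi]
  exact le_of_tendsto_of_tendsto hSlim.abs hrhs hev


end
end
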